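/- arXiv:1806.01158 — 2 statements merged into one kernel-verified Lean document; each statement's English description precedes it below -/
import Mathlib

section
/- Let E be the elliptic curve over ℚ defined by y² = kx³ + lx + m with k = 1019317647604532728704/50501152925375, l = 170640863010859366860672/2657955417125, m = 5018469623203840351296469056/16917886230000625. Then each of the five points (1³, 78134116669224/130068775), (2³, 117823324221624/130068775), (3³, 202645347682344/130068775), (4³, 405025200935544/130068775), (5³, 898732973533416/130068775) satisfies the equation of E; in particular the x-coordinates of these rational points on E form the sequence of five consecutive cubes 1³, 2³, 3³, 4³, 5³. -/
/-- The five points `((i)³, yᵢ)`, `i = 1,…,5`, lie on the curve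
`y² = kx³ + lx + m`; their `x`-coordinates form the sequence of five
consecutive cubes `1³, 2³, 3³, 4³, 5³`. -/
theorem five_term_sequence_of_consecutive_cubes :
    let k : ℚ := 1019317647604532728704 / 50501152925375
    let l : ℚ := 170640863010859366860672 / 2657955417125
    let m : ℚ := 5018469623203840351296469056 / 16917886230000625
    (((78134116669224 : ℚ) / 130068775) ^ 2
        = k * ((1 : ℚ) ^ 3) ^ 3 + l * ((1 : ℚ) ^ 3) + m) ∧
    (((117823324221624 : ℚ) / 130068775) ^ 2
        = k * ((2 : ℚ) ^ 3) ^ 3 + l * ((2 : ℚ) ^ 3) + m) ∧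
    (((202645347682344 : ℚ) / 130068775) ^ 2
        = k * ((3 : ℚ) ^ 3) ^ 3 + l * ((3 : ℚ) ^ 3) + m) ∧
    (((405025200935544 : ℚ) / 130068775) ^ 2
        = k * ((4 : ℚ) ^ 3) ^ 3 + l * ((4 : ℚ) ^ 3) + m) ∧
    (((898732973533416 : ℚ) / 130068775) ^ 2
        = k * ((5 : ℚ) ^ 3) ^ 3 + l * ((5 : ℚ) ^ 3) + m) ∧
    (∃ c : ℚ, ∀ i : Fin 5, (((i : ℕ) + 1 : ℚ)) ^ 3 = (c + ((i : ℕ) + 1 : ℚ)) ^ 3) := by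
  refine ⟨by norm_num, by norm_num, by norm_num, by norm_num, by norm_num, ⟨0, fun i => by ring⟩⟩
end

section
/- For any rational numbers c, p, q, r with the denominators below nonzero, if k, l, m are defined as the unique solution of the linear system p² = k(c−1)⁹ + l(c−1)³ + m, q² = kc⁹ + lc³ + m, r² = k(c+1)⁹ + l(c+1)³ + m, and s ∈ ℚ satisfies s² = k(c+2)⁹ + l(c+2)³ + m, then s² · (3c²−3c+1)(3c²+1)(3c²+3c+1)(c²+2)c = (84+2109c²+626c+243c⁸+27c⁹+1026c⁷+2646c⁶+4536c⁵+5292c⁴+4159c³)p² + (−1674c⁷−1950c²−762c−3951c³−5544c⁴−486c⁸−3780c⁶−5544c⁵−168−81c⁹)q² + (702c⁷+1134c⁶+138c−159c²+243c⁸+81c⁹+252c⁴+1008c⁵+84−207c³)r². -/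
/-- If `k, l, m` solve the linear system putting `((c-1)³,p)`, `(c³,q)`, `((c+1)³,r)`
on `y² = kx³ + lx + m`, and `s² = k(c+2)⁹ + l(c+2)³ + m`, then the quadratic
relation (5) of the paper holds among `p, q, r, s`. -/
theorem fourth_point_relation (c p q r s k l m : ℚ)
    (hc : c ≠ 0)
    (hden : (3 * c ^ 2 - 3 * c + 1) * (3 * c ^ 2 + 1) * (3 * c ^ 2 + 3 * c + 1)
        * (c ^ 2 + 2) ≠ 0)
    (h1 : 27 * c ^ 8 + 54 * c ^ 6 + c ^ 2 + 2 ≠ 0)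
    (h2 : 3 * c ^ 2 - 3 * c + 1 ≠ 0)
    (h3 : 9 * c ^ 6 + 9 * c ^ 5 + 24 * c ^ 4 + 21 * c ^ 3 + 13 * c ^ 2 + 6 * c + 2 ≠ 0)
    (hp : p ^ 2 = k * (c - 1) ^ 9 + l * (c - 1) ^ 3 + m)
    (hq : q ^ 2 = k * c ^ 9 + l * c ^ 3 + m)
    (hr : r ^ 2 = k * (c + 1) ^ 9 + l * (c + 1) ^ 3 + m)
    (hs : s ^ 2 = k * (c + 2) ^ 9 + l * (c + 2) ^ 3 + m) :
    s ^ 2 * ((3 * c ^ 2 - 3 * c + 1) * (3 * c ^ 2 + 1) * (3 * c ^ 2 + 3 * c + 1)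
        * (c ^ 2 + 2) * c)
      = (84 + 2109 * c ^ 2 + 626 * c + 243 * c ^ 8 + 27 * c ^ 9 + 1026 * c ^ 7
          + 2646 * c ^ 6 + 4536 * c ^ 5 + 5292 * c ^ 4 + 4159 * c ^ 3) * p ^ 2
      + (-1674 * c ^ 7 - 1950 * c ^ 2 - 762 * c - 3951 * c ^ 3 - 5544 * c ^ 4
          - 486 * c ^ 8 - 3780 * c ^ 6 - 5544 * c ^ 5 - 168 - 81 * c ^ 9) * q ^ 2
      + (702 * c ^ 7 + 1134 * c ^ 6 + 138 * c - 159 * c ^ 2 + 243 * c ^ 8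
          + 81 * c ^ 9 + 252 * c ^ 4 + 1008 * c ^ 5 + 84 - 207 * c ^ 3) * r ^ 2 := by
  rw [hp, hq, hr, hs]; ring
end
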